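/- arXiv:2005.02250 — 3 statements merged into one kernel-verified Lean document; each statement's English description precedes it below -/
import Mathlib

section
/- Let ℋ be a set of graphs such that no H ∈ ℋ contains a spanning complete bipartite subgraph. For a positive integer w let f(w) denote the supremum of χ(G) over all finite ℋ-free graphs G with ω(G) = w, and suppose f(w) is finite for every w. Then f is superadditive: f(w1) + f(w2) ≤ f(w1 + w2) for all positive integers w1, w2. -/
open SimpleGraph

/-- `G` is `H`-free: no induced subgraph of `G` is isomorphic to `H`. -/
def IndFree {α β : Type*} (H : SimpleGraph α) (G : SimpleGraph β) : Prop :=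
  ∀ s : Set β, ¬ Nonempty (H ≃g G.induce s)

/-- The banner: a 4-cycle `0-1-2-3-0` together with a pendant vertex `4` adjacent to `0`. -/
def banner : SimpleGraph (Fin 5) :=
  SimpleGraph.fromEdgeSet {s(0,1), s(1,2), s(2,3), s(3,0), s(0,4)}

/-- The co-banner: the complement of the banner. -/
def coBanner : SimpleGraph (Fin 5) := bannerᶜ

/-- `2K₂`: the disjoint union of two edges. -/
def twoK2 : SimpleGraph (Fin 4) := SimpleGraph.fromEdgeSet {s(0,1), s(2,3)}

/-- `3K₁`: three pairwise nonadjacent vertices. -/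
def threeK1 : SimpleGraph (Fin 3) := ⊥

/-- The 5-wheel: a 5-cycle `0-1-2-3-4-0` plus a hub `5` adjacent to all cycle vertices. -/
def wheel5 : SimpleGraph (Fin 6) :=
  SimpleGraph.fromEdgeSet
    {s(0,1), s(1,2), s(2,3), s(3,4), s(4,0), s(5,0), s(5,1), s(5,2), s(5,3), s(5,4)}

/-- A nonempty set `M` is a module if every vertex outside `M` is adjacent to all
or to none of the vertices of `M`. -/
def IsModule {V : Type*} (G : SimpleGraph V) (M : Set V) : Prop :=
  M.Nonempty ∧ ∀ v ∉ M, (∀ u ∈ M, G.Adj v u) ∨ (∀ u ∈ M, ¬ G.Adj v u)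

/-- `X` is a clique-separator of modules in `G`. -/
def IsCliqueSeparatorOfModules {V : Type*} (G : SimpleGraph V) (X : Set V) : Prop :=
  (∃ (k : ℕ) (Xs : Fin k → Set V),
      (∀ i, IsModule G (Xs i)) ∧
      (∀ i j, i ≠ j → Disjoint (Xs i) (Xs j)) ∧
      (∀ i j, i ≠ j → ∀ u ∈ Xs i, ∀ v ∈ Xs j, G.Adj u v) ∧
      X = ⋃ i, Xs i) ∧
  (∃ A B : Set V, A ∪ B = Set.univ ∧ (A \ B).Nonempty ∧ (B \ A).Nonempty ∧
      (∀ a ∈ A \ B, ∀ b ∈ B \ A, ¬ G.Adj a b) ∧ A ∩ B = X)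

/-- A graph is prime if it has no homogeneous set,
i.e. no module `M` with `1 < |M| < |V(G)|`. -/
def IsPrime {V : Type*} (G : SimpleGraph V) : Prop :=
  ¬ ∃ M : Set V, IsModule G M ∧ 1 < M.ncard ∧ M.ncard < Nat.card V

/-- A nonempty graph is critical if deleting any vertex decreases the chromatic number. -/
def IsCritical {V : Type*} (G : SimpleGraph V) : Prop :=
  Nonempty V ∧ ∀ v : V, (G.induce {u | u ≠ v}).chromaticNumber < G.chromaticNumber

/-- `G` is a `non-empty, 2K₁-free'-expansion of `G'`: the fibres of `f` partition `V(G)`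
into nonempty cliques, with complete/empty bipartite connections according to `G'`. -/
def IsExpansionOf {V W : Type*} (G : SimpleGraph V) (G' : SimpleGraph W) : Prop :=
  ∃ f : V → W, Function.Surjective f ∧
    (∀ u v, u ≠ v → f u = f v → G.Adj u v) ∧
    (∀ u v, f u ≠ f v → (G.Adj u v ↔ G'.Adj (f u) (f v)))

/-- The weighted chromatic number `χ_q(G)`: the least `k` such that every vertex `v`
can be assigned a set of `q v` colours from `{1,…,k}` with disjoint sets on adjacent
vertices. -/
noncomputable def wChromaticNumber {V : Type*} (G : SimpleGraph V) (q : V → ℕ) : ℕ :=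
  sInf {k | ∃ L : V → Finset (Fin k), (∀ v, (L v).card = q v) ∧
    ∀ ⦃u v⦄, G.Adj u v → Disjoint (L u) (L v)}

/-- The weighted clique number `ω_q(G)`: the maximum total weight of a clique. -/
noncomputable def wCliqueNum {V : Type*} (G : SimpleGraph V) (q : V → ℕ) : ℕ :=
  sSup {m | ∃ s : Finset V, G.IsClique (s : Set V) ∧ m = ∑ v ∈ s, q v}

/-- `Q(F)`: a path `u₁u₂u₃u₄` whose third vertex `u₃` has been replaced by a copy of `F`,
each of whose vertices is adjacent to both `u₂` and `u₄`. Here `inr 0 = u₁`, `inr 1 = u₂`,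
`inr 2 = u₄`, and `inl w` are the vertices of the copy of `F`. -/
def QGraph {W : Type*} (F : SimpleGraph W) : SimpleGraph (W ⊕ Fin 3) :=
  SimpleGraph.fromRel (fun a b =>
    (∃ w w', a = Sum.inl w ∧ b = Sum.inl w' ∧ F.Adj w w') ∨
    (a = Sum.inr 0 ∧ b = Sum.inr 1) ∨
    (∃ w, a = Sum.inl w ∧ (b = Sum.inr 1 ∨ b = Sum.inr 2)))

/-- The join of two graphs: all edges of both graphs plus all edges in between. -/
def joinGraph {α β : Type*} (G₁ : SimpleGraph α) (G₂ : SimpleGraph β) :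
    SimpleGraph (α ⊕ β) :=
  SimpleGraph.fromRel (fun a b =>
    (∃ u v, a = Sum.inl u ∧ b = Sum.inl v ∧ G₁.Adj u v) ∨
    (∃ u v, a = Sum.inr u ∧ b = Sum.inr v ∧ G₂.Adj u v) ∨
    (∃ u v, a = Sum.inl u ∧ b = Sum.inr v))

/-- `H` has a spanning complete bipartite subgraph. -/
def HasSpanningCompleteBipartite {α : Type*} (H : SimpleGraph α) : Prop :=
  ∃ A B : Set α, A.Nonempty ∧ B.Nonempty ∧ Disjoint A B ∧ A ∪ B = Set.univ ∧
    ∀ a ∈ A, ∀ b ∈ B, H.Adj a b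

/-- `G'` is a `q`-expansion of `G`: each vertex `u` of `G` is replaced by a clique on
`q u` vertices, joined completely or not at all according to adjacency in `G`. -/
def IsWeightedExpansion {V' V : Type*} (G' : SimpleGraph V') (G : SimpleGraph V)
    (q : V → ℕ) : Prop :=
  ∃ f : V' → V,
    (∀ v : V, Nat.card (f ⁻¹' {v}) = q v) ∧
    (∀ a b : V', a ≠ b → f a = f b → G'.Adj a b) ∧
    (∀ a b : V', f a ≠ f b → (G'.Adj a b ↔ G.Adj (f a) (f b)))

/-- `q` is `⊲`-minimal: no weight function pointwise at most `q` with strictly smaller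
total weight has the same weighted chromatic number. -/
def IsTriMinimal {V : Type*} [Fintype V] (G : SimpleGraph V) (q : V → ℕ) : Prop :=
  ¬ ∃ q' : V → ℕ, (∀ v, q' v ≤ q v) ∧ (∑ v, q' v) < (∑ v, q v) ∧
      wChromaticNumber G q' = wChromaticNumber G q

/-- `fstar ℋ w` is the supremum of the chromatic numbers of finite `ℋ`-free graphs
with clique number `w`. -/
noncomputable def fstar (ℋ : Set (Σ n : ℕ, SimpleGraph (Fin n))) (w : ℕ) : ℕ∞ :=
  ⨆ (n : ℕ) (G : SimpleGraph (Fin n)) (_ : ∀ H ∈ ℋ, IndFree H.2 G)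
    (_ : G.cliqueNum = w), G.chromaticNumber

/-!
The join of two graphs has clique number `ω₁ + ω₂`, and its chromatic number is at least
`χ₁ + χ₂` because the two sides receive disjoint sets of colours. An induced copy of `H` in a
join either lies inside one side or meets both, and in the latter case the two sides split `H`
by a spanning complete bipartite subgraph; so joins of `ℋ`-free graphs are `ℋ`-free, and
taking suprema gives superadditivity. The only degenerate case is a member of `ℋ` with at most
one vertex: it is induced in every nonempty graph, so both sides are suprema over nothing.
-/

lemma indFree_iff_not_isIndContained {U V : Type*} {F : SimpleGraph U} {G : SimpleGraph V} :
    IndFree F G ↔ ¬ F ⊴ G := by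
  simp [IndFree, isIndContained_iff_exists_iso_induce]

lemma IndFree.congr_right {U V W : Type*} {F : SimpleGraph U} {G : SimpleGraph V}
    {H : SimpleGraph W} (h : IndFree F G) (e : G ≃g H) : IndFree F H := by
  rw [indFree_iff_not_isIndContained] at *
  exact fun hF => h (hF.trans e.symm.isIndContained)

namespace SimpleGraph

variable {U V W X : Type*} {G : SimpleGraph V} {H : SimpleGraph W}

lemma IsIndContained.of_range_subset {F : SimpleGraph U} {K : SimpleGraph X} (f : F ↪g K)
    (e : G ↪g K) (h : Set.range f ⊆ Set.range e) : F ⊴ G := by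
  obtain ⟨g, hg⟩ := Set.range_subset_range_iff_exists_comp.1 h
  have hfg : ∀ a, f a = e (g a) := congrFun hg
  refine ⟨⟨⟨g, fun a b hab => f.injective (by rw [hfg, hfg, hab])⟩, fun {a b} => ?_⟩⟩
  change G.Adj (g a) (g b) ↔ F.Adj a b
  rw [← e.map_adj_iff, ← hfg, ← hfg, f.map_adj_iff]

lemma isIndContained_of_subsingleton {F : SimpleGraph U} [Subsingleton U] [Nonempty V] :
    F ⊴ G := by
  obtain ⟨v⟩ := ‹Nonempty V›
  refine ⟨⟨⟨fun _ => v, fun a b _ => Subsingleton.elim a b⟩, fun {a b} => ?_⟩⟩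
  simp [Subsingleton.elim a b]

lemma Embedding.cliqueNum_le [Finite W] (f : G ↪g H) : G.cliqueNum ≤ H.cliqueNum := by
  classical
  obtain ⟨s, hs⟩ := G.exists_isNClique_cliqueNum
  have hclique : H.IsClique (s.map f.toEmbedding : Set W) := by
    simp only [Finset.coe_map, RelEmbedding.coe_toEmbedding]
    rintro _ ⟨a, ha, rfl⟩ _ ⟨b, hb, rfl⟩ hab
    exact f.map_adj_iff.2 (hs.isClique ha hb (ne_of_apply_ne f hab))
  calc G.cliqueNum = (s.map f.toEmbedding).card := by rw [Finset.card_map, hs.card_eq]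
    _ ≤ H.cliqueNum := hclique.card_le_cliqueNum

lemma cliqueNum_congr [Finite V] [Finite W] (e : G ≃g H) : G.cliqueNum = H.cliqueNum :=
  le_antisymm e.toEmbedding.cliqueNum_le e.symm.toEmbedding.cliqueNum_le

lemma cliqueNum_top [Fintype V] : (⊤ : SimpleGraph V).cliqueNum = Fintype.card V := by
  refine le_antisymm ?_ ?_
  · exact_mod_cast (cliqueNum_le_chromaticNumber).trans chromaticNumber_le_card
  · simpa using (IsClique.top (s := ((Finset.univ : Finset V) : Set V))).card_le_cliqueNum

lemma hasSpanningCompleteBipartite_top [Nontrivial V] :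
    HasSpanningCompleteBipartite (⊤ : SimpleGraph V) := by
  obtain ⟨a, b, hab⟩ := exists_pair_ne V
  exact ⟨{a}, {a}ᶜ, Set.singleton_nonempty a, ⟨b, hab.symm⟩, disjoint_compl_right,
    Set.union_compl_self _, fun x hx y hy => by rintro rfl; exact hy hx⟩

lemma indFree_top {F : SimpleGraph U} [Nontrivial U] (hF : ¬ HasSpanningCompleteBipartite F) :
    IndFree F (⊤ : SimpleGraph V) := by
  rw [indFree_iff_not_isIndContained]
  intro h
  rw [eq_top_of_isIndContained_top h] at hF
  exact hF hasSpanningCompleteBipartite_top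

lemma Coloring.chromaticNumber_le_encard_range {α : Type*} (C : G.Coloring α) :
    G.chromaticNumber ≤ (Set.range C).encard := by
  let f : G →g (⊤ : SimpleGraph (Set.range C)) :=
    ⟨fun v => ⟨C v, v, rfl⟩, fun h e => C.valid h (congrArg Subtype.val e)⟩
  simpa [chromaticNumber_top_eq_enat_card] using chromaticNumber_mono_of_hom f

@[simp] lemma joinGraph_adj_inl_inl {u v : V} :
    (joinGraph G H).Adj (.inl u) (.inl v) ↔ G.Adj u v := by
  simp only [joinGraph, fromRel_adj]
  aesop (add simp adj_comm)

@[simp] lemma joinGraph_adj_inr_inr {u v : W} :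
    (joinGraph G H).Adj (.inr u) (.inr v) ↔ H.Adj u v := by
  simp only [joinGraph, fromRel_adj]
  aesop (add simp adj_comm)

@[simp] lemma joinGraph_adj_inl_inr {u : V} {v : W} : (joinGraph G H).Adj (.inl u) (.inr v) := by
  simp [joinGraph]

@[simp] lemma joinGraph_adj_inr_inl {u : W} {v : V} : (joinGraph G H).Adj (.inr u) (.inl v) :=
  joinGraph_adj_inl_inr.symm

def Embedding.joinInl : G ↪g joinGraph G H :=
  ⟨⟨Sum.inl, Sum.inl_injective⟩, joinGraph_adj_inl_inl⟩

def Embedding.joinInr : H ↪g joinGraph G H :=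
  ⟨⟨Sum.inr, Sum.inr_injective⟩, joinGraph_adj_inr_inr⟩

lemma chromaticNumber_add_le_joinGraph :
    G.chromaticNumber + H.chromaticNumber ≤ (joinGraph G H).chromaticNumber := by
  refine le_iInf₂ fun k ⟨C⟩ => ?_
  have hdisj : Disjoint (Set.range (C ∘ Sum.inl)) (Set.range (C ∘ Sum.inr)) := by
    rw [Set.disjoint_range_iff]
    exact fun u v => C.valid joinGraph_adj_inl_inr
  calc G.chromaticNumber + H.chromaticNumber
      ≤ (Set.range (C ∘ Sum.inl)).encard + (Set.range (C ∘ Sum.inr)).encard :=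
        add_le_add (Coloring.chromaticNumber_le_encard_range (C.comp Embedding.joinInl.toHom))
          (Coloring.chromaticNumber_le_encard_range (C.comp Embedding.joinInr.toHom))
    _ = (Set.range (C ∘ Sum.inl) ∪ Set.range (C ∘ Sum.inr)).encard :=
        (Set.encard_union_eq hdisj).symm
    _ ≤ ENat.card (Fin k) := Set.encard_le_card
    _ = k := by simp

lemma isClique_joinGraph_iff {s : Set (V ⊕ W)} :
    (joinGraph G H).IsClique s ↔ G.IsClique (Sum.inl ⁻¹' s) ∧ H.IsClique (Sum.inr ⁻¹' s) := by
  refine ⟨fun h => ⟨fun u hu v hv huv => ?_, fun u hu v hv huv => ?_⟩, fun ⟨hG, hH⟩ => ?_⟩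
  · exact joinGraph_adj_inl_inl.1 (h hu hv (by simpa using huv))
  · exact joinGraph_adj_inr_inr.1 (h hu hv (by simpa using huv))
  · rintro (u | u) hu (v | v) hv huv
    · exact joinGraph_adj_inl_inl.2 (hG hu hv (by simpa using huv))
    · exact joinGraph_adj_inl_inr
    · exact joinGraph_adj_inr_inl
    · exact joinGraph_adj_inr_inr.2 (hH hu hv (by simpa using huv))

lemma cliqueNum_joinGraph [Finite V] [Finite W] :
    (joinGraph G H).cliqueNum = G.cliqueNum + H.cliqueNum := by
  classical
  refine le_antisymm ?_ ?_
  · obtain ⟨s, hs⟩ := (joinGraph G H).exists_isNClique_cliqueNum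
    have hsplit : G.IsClique (s.toLeft : Set V) ∧ H.IsClique (s.toRight : Set W) := by
      convert isClique_joinGraph_iff.1 hs.isClique using 2 <;> ext <;> simp
    rw [← hs.card_eq, ← Finset.card_toLeft_add_card_toRight]
    exact add_le_add hsplit.1.card_le_cliqueNum hsplit.2.card_le_cliqueNum
  · obtain ⟨s, hs⟩ := G.exists_isNClique_cliqueNum
    obtain ⟨t, ht⟩ := H.exists_isNClique_cliqueNum
    have hst : (joinGraph G H).IsClique (s.disjSum t : Set (V ⊕ W)) := by
      refine isClique_joinGraph_iff.2 ?_
      convert And.intro hs.isClique ht.isClique using 2 <;> ext <;> simp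
    simpa [hs.card_eq, ht.card_eq] using hst.card_le_cliqueNum

lemma IsIndContained.of_joinGraph {F : SimpleGraph U} (hF : ¬ HasSpanningCompleteBipartite F)
    (h : F ⊴ joinGraph G H) : F ⊴ G ∨ F ⊴ H := by
  obtain ⟨f⟩ := h
  by_cases hl : ∀ a, (f a).isLeft
  · refine .inl (.of_range_subset f Embedding.joinInl ?_)
    rintro _ ⟨a, rfl⟩
    obtain ⟨u, hu⟩ := Sum.isLeft_iff.1 (hl a)
    exact ⟨u, hu.symm⟩
  by_cases hr : ∀ a, (f a).isRight
  · refine .inr (.of_range_subset f Embedding.joinInr ?_)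
    rintro _ ⟨a, rfl⟩
    obtain ⟨u, hu⟩ := Sum.isRight_iff.1 (hr a)
    exact ⟨u, hu.symm⟩
  push Not at hl hr
  obtain ⟨b, hb⟩ := hl
  obtain ⟨a, ha⟩ := hr
  refine absurd ⟨{a | (f a).isLeft}, {a | (f a).isLeft}ᶜ, ⟨a, ?_⟩, ⟨b, hb⟩,
    disjoint_compl_right, Set.union_compl_self _, fun a ha b hb => ?_⟩ hF
  · simpa using ha
  · obtain ⟨u, hu⟩ := Sum.isLeft_iff.1 ha
    obtain ⟨v, hv⟩ := Sum.isRight_iff.1 (Sum.not_isLeft.1 hb)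
    rw [← f.map_adj_iff, hu, hv]
    exact joinGraph_adj_inl_inr

lemma indFree_joinGraph {F : SimpleGraph U} (hF : ¬ HasSpanningCompleteBipartite F)
    (hG : IndFree F G) (hH : IndFree F H) : IndFree F (joinGraph G H) := by
  simp only [indFree_iff_not_isIndContained] at *
  exact fun h => (IsIndContained.of_joinGraph hF h).elim hG hH

end SimpleGraph

section fstar

variable {ℋ : Set (Σ n : ℕ, SimpleGraph (Fin n))}

def FreeGraphWithCliqueNum (ℋ : Set (Σ n : ℕ, SimpleGraph (Fin n))) (w : ℕ) : Type :=
  {G : Σ n, SimpleGraph (Fin n) // (∀ H ∈ ℋ, IndFree H.2 G.2) ∧ G.2.cliqueNum = w}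

lemma fstar_eq_iSup (ℋ : Set (Σ n : ℕ, SimpleGraph (Fin n))) (w : ℕ) :
    fstar ℋ w = ⨆ G : FreeGraphWithCliqueNum ℋ w, G.1.2.chromaticNumber :=
  le_antisymm
    (iSup₂_le fun n G => iSup₂_le fun hfree hw => le_iSup_of_le ⟨⟨n, G⟩, hfree, hw⟩ le_rfl)
    (iSup_le fun G => le_iSup₂_of_le G.1.1 G.1.2 (le_iSup₂_of_le G.2.1 G.2.2 le_rfl))

lemma chromaticNumber_le_fstar {V : Type*} [Finite V] (G : SimpleGraph V)
    (hG : ∀ H ∈ ℋ, IndFree H.2 G) : G.chromaticNumber ≤ fstar ℋ G.cliqueNum := by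
  let e := Iso.map (Finite.equivFin V) G
  rw [chromaticNumber_congr e, cliqueNum_congr e, fstar_eq_iSup]
  exact le_iSup_of_le ⟨⟨_, _⟩, fun H hH => (hG H hH).congr_right e, rfl⟩ le_rfl

lemma isEmpty_freeGraphWithCliqueNum {F : Σ n : ℕ, SimpleGraph (Fin n)} (hF : F ∈ ℋ)
    (hF₁ : F.1 ≤ 1) {w : ℕ} (hw : 0 < w) : IsEmpty (FreeGraphWithCliqueNum ℋ w) := by
  refine ⟨fun ⟨⟨n, G⟩, hfree, hG⟩ => ?_⟩
  obtain ⟨s, hs⟩ := G.exists_isNClique_cliqueNum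
  obtain ⟨v, -⟩ := Finset.card_pos.1 (hs.card_eq.trans hG ▸ hw)
  have : Nonempty (Fin n) := ⟨v⟩
  have : Subsingleton (Fin F.1) := Fin.subsingleton_iff_le_one.2 hF₁
  exact indFree_iff_not_isIndContained.1 (hfree F hF) isIndContained_of_subsingleton

lemma nonempty_freeGraphWithCliqueNum (hℋ : ∀ H ∈ ℋ, ¬ HasSpanningCompleteBipartite H.2)
    (hℋ₂ : ∀ H ∈ ℋ, 2 ≤ H.1) (w : ℕ) : Nonempty (FreeGraphWithCliqueNum ℋ w) := by
  refine ⟨⟨⟨w, ⊤⟩, fun H hH => ?_, by simp [cliqueNum_top]⟩⟩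
  have : Nontrivial (Fin H.1) := Fin.nontrivial_iff_two_le.2 (hℋ₂ H hH)
  exact indFree_top (hℋ H hH)

end fstar

theorem stmt15_general (ℋ : Set (Σ n : ℕ, SimpleGraph (Fin n)))
    (hH : ∀ H ∈ ℋ, ¬ HasSpanningCompleteBipartite H.2) :
    ∀ w₁ w₂ : ℕ, 0 < w₁ → 0 < w₂ →
      fstar ℋ w₁ + fstar ℋ w₂ ≤ fstar ℋ (w₁ + w₂) := by
  intro w₁ w₂ hw₁ hw₂
  rw [fstar_eq_iSup ℋ w₁, fstar_eq_iSup ℋ w₂]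
  by_cases hsmall : ∃ F ∈ ℋ, F.1 ≤ 1
  · obtain ⟨F, hF, hF₁⟩ := hsmall
    have := isEmpty_freeGraphWithCliqueNum hF hF₁ hw₁
    have := isEmpty_freeGraphWithCliqueNum hF hF₁ hw₂
    simp
  push Not at hsmall
  have := nonempty_freeGraphWithCliqueNum hH hsmall w₁
  have := nonempty_freeGraphWithCliqueNum hH hsmall w₂
  refine ENat.iSup_add_iSup_le fun G₁ G₂ => ?_
  calc G₁.1.2.chromaticNumber + G₂.1.2.chromaticNumber
      ≤ (joinGraph G₁.1.2 G₂.1.2).chromaticNumber := chromaticNumber_add_le_joinGraph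
    _ ≤ fstar ℋ (joinGraph G₁.1.2 G₂.1.2).cliqueNum := chromaticNumber_le_fstar _ fun H hH' =>
        indFree_joinGraph (hH H hH') (G₁.2.1 H hH') (G₂.2.1 H hH')
    _ = fstar ℋ (w₁ + w₂) := by rw [cliqueNum_joinGraph, G₁.2.2, G₂.2.2]

/-- If no `H ∈ ℋ` has a spanning complete bipartite subgraph and the optimal
`χ`-binding function `fstar ℋ` is finite everywhere, then it is superadditive. -/
theorem stmt15 (ℋ : Set (Σ n : ℕ, SimpleGraph (Fin n)))
    (hH : ∀ H ∈ ℋ, ¬ HasSpanningCompleteBipartite H.2)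
    (hfin : ∀ w : ℕ, 0 < w → fstar ℋ w ≠ ⊤) :
    ∀ w₁ w₂ : ℕ, 0 < w₁ → 0 < w₂ →
      fstar ℋ w₁ + fstar ℋ w₂ ≤ fstar ℋ (w₁ + w₂) :=
  stmt15_general ℋ hH
end

section
/- Let C be a cycle of length 5 and q: V(C) → ℕ a vertex-weight function with ω_q(C) ≥ 1. Then χ_q(C) = max{ω_q(C), ⌈q(C)/2⌉}, and this value is at most ⌈(5·ω_q(C) − 1)/4⌉. -/
open SimpleGraph

lemma step0 (c0 c1 c2 c3 c4 m w0 w1 w2 w3 w4 : ℕ)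
    (hs : w0+w1+w2+w3+w4 = m)
    (k0 : w4+w0 ≤ c0) (k1 : w0+w1 ≤ c1) (k2 : w1+w2 ≤ c2) (k3 : w2+w3 ≤ c3) (k4 : w3+w4 ≤ c4)
    (h : 2*(m+1) ≤ c0+c1+c2+c3+c4)
    (h0 : m+1 ≤ c1+c3+c4) (h1 : m+1 ≤ c2+c4+c0) (h2 : m+1 ≤ c3+c0+c1)
    (h3 : m+1 ≤ c4+c1+c2) (h4 : m+1 ≤ c0+c2+c3)
    (b0 : ¬(w4+w0 < c0 ∧ w0+w1 < c1)) (b1 : ¬(w0+w1 < c1 ∧ w1+w2 < c2))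
    (b2 : ¬(w1+w2 < c2 ∧ w2+w3 < c3)) (b3 : ¬(w2+w3 < c3 ∧ w3+w4 < c4))
    (b4 : ¬(w3+w4 < c4 ∧ w4+w0 < c0))
    (u0 : w4+w0 < c0) :
    ∃ v0 v1 v2 v3 v4, v0+v1+v2+v3+v4 = m+1 ∧ v4+v0 ≤ c0 ∧ v0+v1 ≤ c1 ∧
      v1+v2 ≤ c2 ∧ v2+v3 ≤ c3 ∧ v3+v4 ≤ c4 := by
  by_cases u2 : w1+w2 < c2
  · exact ⟨w0, w1, w2+1, w3-1, w4+1, by omega, by omega, by omega, by omega, by omega, by omega⟩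
  · by_cases u3 : w2+w3 < c3
    · exact ⟨w0+1, w1-1, w2+1, w3, w4, by omega, by omega, by omega, by omega, by omega, by omega⟩
    · exact ⟨w0+1, w1-1, w2+1, w3-1, w4+1, by omega, by omega, by omega, by omega, by omega, by omega⟩

lemma stepcyc (c0 c1 c2 c3 c4 m w0 w1 w2 w3 w4 : ℕ)
    (hs : w0+w1+w2+w3+w4 = m)
    (k0 : w4+w0 ≤ c0) (k1 : w0+w1 ≤ c1) (k2 : w1+w2 ≤ c2) (k3 : w2+w3 ≤ c3) (k4 : w3+w4 ≤ c4)
    (h : 2*(m+1) ≤ c0+c1+c2+c3+c4)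
    (h0 : m+1 ≤ c1+c3+c4) (h1 : m+1 ≤ c2+c4+c0) (h2 : m+1 ≤ c3+c0+c1)
    (h3 : m+1 ≤ c4+c1+c2) (h4 : m+1 ≤ c0+c2+c3) :
    ∃ v0 v1 v2 v3 v4, v0+v1+v2+v3+v4 = m+1 ∧ v4+v0 ≤ c0 ∧ v0+v1 ≤ c1 ∧
      v1+v2 ≤ c2 ∧ v2+v3 ≤ c3 ∧ v3+v4 ≤ c4 := by
  by_cases e0 : w4+w0 < c0 ∧ w0+w1 < c1
  · exact ⟨w0+1, w1, w2, w3, w4, by omega, by omega, by omega, by omega, by omega, by omega⟩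
  by_cases e1 : w0+w1 < c1 ∧ w1+w2 < c2
  · exact ⟨w0, w1+1, w2, w3, w4, by omega, by omega, by omega, by omega, by omega, by omega⟩
  by_cases e2 : w1+w2 < c2 ∧ w2+w3 < c3
  · exact ⟨w0, w1, w2+1, w3, w4, by omega, by omega, by omega, by omega, by omega, by omega⟩
  by_cases e3 : w2+w3 < c3 ∧ w3+w4 < c4
  · exact ⟨w0, w1, w2, w3+1, w4, by omega, by omega, by omega, by omega, by omega, by omega⟩
  by_cases e4 : w3+w4 < c4 ∧ w4+w0 < c0
  · exact ⟨w0, w1, w2, w3, w4+1, by omega, by omega, by omega, by omega, by omega, by omega⟩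
  by_cases u0 : w4+w0 < c0
  · exact step0 c0 c1 c2 c3 c4 m w0 w1 w2 w3 w4 hs k0 k1 k2 k3 k4 h h0 h1 h2 h3 h4 e0 e1 e2 e3 e4 u0
  by_cases u1 : w0+w1 < c1
  · obtain ⟨v1, v2, v3, v4, v0, a, b1, b2, b3, b4, b0⟩ :=
      step0 c1 c2 c3 c4 c0 m w1 w2 w3 w4 w0 (by omega) k1 k2 k3 k4 k0 (by omega)
        h1 h2 h3 h4 h0 e1 e2 e3 e4 e0 u1
    exact ⟨v0, v1, v2, v3, v4, by omega, b0, b1, b2, b3, b4⟩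
  by_cases u2 : w1+w2 < c2
  · obtain ⟨v2, v3, v4, v0, v1, a, b2, b3, b4, b0, b1⟩ :=
      step0 c2 c3 c4 c0 c1 m w2 w3 w4 w0 w1 (by omega) k2 k3 k4 k0 k1 (by omega)
        h2 h3 h4 h0 h1 e2 e3 e4 e0 e1 u2
    exact ⟨v0, v1, v2, v3, v4, by omega, b0, b1, b2, b3, b4⟩
  by_cases u3 : w2+w3 < c3
  · obtain ⟨v3, v4, v0, v1, v2, a, b3, b4, b0, b1, b2⟩ :=
      step0 c3 c4 c0 c1 c2 m w3 w4 w0 w1 w2 (by omega) k3 k4 k0 k1 k2 (by omega)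
        h3 h4 h0 h1 h2 e3 e4 e0 e1 e2 u3
    exact ⟨v0, v1, v2, v3, v4, by omega, b0, b1, b2, b3, b4⟩
  by_cases u4 : w3+w4 < c4
  · obtain ⟨v4, v0, v1, v2, v3, a, b4, b0, b1, b2, b3⟩ :=
      step0 c4 c0 c1 c2 c3 m w4 w0 w1 w2 w3 (by omega) k4 k0 k1 k2 k3 (by omega)
        h4 h0 h1 h2 h3 e4 e0 e1 e2 e3 u4
    exact ⟨v0, v1, v2, v3, v4, by omega, b0, b1, b2, b3, b4⟩
  · exact absurd h (by omega)

lemma cyc (c0 c1 c2 c3 c4 : ℕ) (m : ℕ)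
    (h : 2*m ≤ c0+c1+c2+c3+c4)
    (h0 : m ≤ c1+c3+c4) (h1 : m ≤ c2+c4+c0) (h2 : m ≤ c3+c0+c1)
    (h3 : m ≤ c4+c1+c2) (h4 : m ≤ c0+c2+c3) :
    ∃ w0 w1 w2 w3 w4, w0+w1+w2+w3+w4 = m ∧ w4+w0 ≤ c0 ∧ w0+w1 ≤ c1 ∧
      w1+w2 ≤ c2 ∧ w2+w3 ≤ c3 ∧ w3+w4 ≤ c4 := by
  induction m with
  | zero => exact ⟨0,0,0,0,0, by omega, by omega, by omega, by omega, by omega, by omega⟩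
  | succ n ih =>
    obtain ⟨w0, w1, w2, w3, w4, hs, k0, k1, k2, k3, k4⟩ :=
      ih (by omega) (by omega) (by omega) (by omega) (by omega) (by omega)
    exact stepcyc c0 c1 c2 c3 c4 n w0 w1 w2 w3 w4 hs k0 k1 k2 k3 k4 h h0 h1 h2 h3 h4

lemma tri_card {s t u : Finset ℕ} (h1 : Disjoint s t) (h2 : Disjoint s u) (h3 : Disjoint t u) :
    (s ∪ t ∪ u).card = s.card + t.card + u.card := by
  rw [Finset.card_union_of_disjoint (Finset.disjoint_union_left.2 ⟨h2, h3⟩),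
    Finset.card_union_of_disjoint h1]

lemma ico_disj {a b c d : ℕ} (h : b ≤ c ∨ d ≤ a) :
    Disjoint (Finset.Ico a b) (Finset.Ico c d) := by
  rw [Finset.disjoint_left]
  intro x hx hx'
  simp only [Finset.mem_Ico] at hx hx'
  omega

lemma build (q0 q1 q2 q3 q4 k : ℕ) (e0 : q0+q1 ≤ k) (e1 : q1+q2 ≤ k) (e2 : q2+q3 ≤ k)
    (e3 : q3+q4 ≤ k) (e4 : q4+q0 ≤ k) (hS : q0+q1+q2+q3+q4 ≤ 2*k) :
    ∃ N0 N1 N2 N3 N4 : Finset ℕ,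
      (∀ x ∈ N0, x < k) ∧ (∀ x ∈ N1, x < k) ∧ (∀ x ∈ N2, x < k) ∧
      (∀ x ∈ N3, x < k) ∧ (∀ x ∈ N4, x < k) ∧
      N0.card = q0 ∧ N1.card = q1 ∧ N2.card = q2 ∧ N3.card = q3 ∧ N4.card = q4 ∧
      Disjoint N0 N1 ∧ Disjoint N1 N2 ∧ Disjoint N2 N3 ∧ Disjoint N3 N4 ∧ Disjoint N4 N0 := by
  set S := q0+q1+q2+q3+q4 with hSdef
  set m := S - k with hm
  obtain ⟨p0, p2, p4, p1, p3, hsum, c0, c1, c2, c3, c4⟩ :=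
    cyc q0 q2 q4 q1 q3 m (by omega) (by omega) (by omega) (by omega) (by omega) (by omega)
  -- c0 : p3+p0 ≤ q0, c1 : p0+p2 ≤ q2, c2 : p2+p4 ≤ q4, c3 : p4+p1 ≤ q1, c4 : p1+p3 ≤ q3
  set o1 := p0 with ho1
  set o2 := p0+p1 with ho2
  set o3 := p0+p1+p2 with ho3
  set o4 := p0+p1+p2+p3 with ho4
  set t := p0+p1+p2+p3+p4 with ht
  set s0 := q0 - p0 - p3 with hs0
  set s1 := q1 - p1 - p4 with hs1
  set s2 := q2 - p2 - p0 with hs2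
  set s3 := q3 - p3 - p1 with hs3
  set s4 := q4 - p4 - p2 with hs4
  set u0 := t with hu0
  set u1 := t+s0 with hu1
  set u2 := t+s0+s1 with hu2
  set u3 := t+s0+s1+s2 with hu3
  set u4 := t+s0+s1+s2+s3 with hu4
  refine ⟨Finset.Ico 0 p0 ∪ Finset.Ico o3 (o3+p3) ∪ Finset.Ico u0 (u0+s0),
    Finset.Ico o1 (o1+p1) ∪ Finset.Ico o4 (o4+p4) ∪ Finset.Ico u1 (u1+s1),
    Finset.Ico o2 (o2+p2) ∪ Finset.Ico 0 p0 ∪ Finset.Ico u2 (u2+s2),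
    Finset.Ico o3 (o3+p3) ∪ Finset.Ico o1 (o1+p1) ∪ Finset.Ico u3 (u3+s3),
    Finset.Ico o4 (o4+p4) ∪ Finset.Ico o2 (o2+p2) ∪ Finset.Ico u4 (u4+s4),
    ?_, ?_, ?_, ?_, ?_, ?_, ?_, ?_, ?_, ?_, ?_, ?_, ?_, ?_, ?_⟩
  -- bounds
  · intro x hx; simp only [Finset.mem_union, Finset.mem_Ico] at hx; omega
  · intro x hx; simp only [Finset.mem_union, Finset.mem_Ico] at hx; omega
  · intro x hx; simp only [Finset.mem_union, Finset.mem_Ico] at hx; omega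
  · intro x hx; simp only [Finset.mem_union, Finset.mem_Ico] at hx; omega
  · intro x hx; simp only [Finset.mem_union, Finset.mem_Ico] at hx; omega
  -- cards
  · rw [tri_card (ico_disj (by omega)) (ico_disj (by omega)) (ico_disj (by omega))]
    simp [Nat.card_Ico]; omega
  · rw [tri_card (ico_disj (by omega)) (ico_disj (by omega)) (ico_disj (by omega))]
    simp [Nat.card_Ico]; omega
  · rw [tri_card (ico_disj (by omega)) (ico_disj (by omega)) (ico_disj (by omega))]
    simp [Nat.card_Ico]; omega
  · rw [tri_card (ico_disj (by omega)) (ico_disj (by omega)) (ico_disj (by omega))]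
    simp [Nat.card_Ico]; omega
  · rw [tri_card (ico_disj (by omega)) (ico_disj (by omega)) (ico_disj (by omega))]
    simp [Nat.card_Ico]; omega
  -- disjointness
  all_goals
    rw [Finset.disjoint_left]
    intro x hx hx'
    simp only [Finset.mem_union, Finset.mem_Ico] at hx hx'
    omega

/-- For a cycle `C` of length `5` with vertex weights `q` and `ω_q(C) ≥ 1`,
`χ_q(C) = max {ω_q(C), ⌈q(C)/2⌉}`, and this value is at most
`⌈(5·ω_q(C) − 1)/4⌉`. -/
theorem stmt16 (q : Fin 5 → ℕ) (hq : 1 ≤ wCliqueNum (cycleGraph 5) q) :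
    wChromaticNumber (cycleGraph 5) q =
      max (wCliqueNum (cycleGraph 5) q) ((∑ v, q v + 1) / 2) ∧
    wChromaticNumber (cycleGraph 5) q ≤
      (5 * wCliqueNum (cycleGraph 5) q - 1 + 3) / 4 := by
  set G := cycleGraph 5 with hG
  set ω := wCliqueNum G q with hω
  set S := ∑ v, q v with hSdef
  have hS5 : S = q 0 + q 1 + q 2 + q 3 + q 4 := Fin.sum_univ_five q
  set k := max ω ((S + 1) / 2) with hk
  set T := {k | ∃ L : Fin 5 → Finset (Fin k), (∀ v, (L v).card = q v) ∧
    ∀ ⦃u v⦄, G.Adj u v → Disjoint (L u) (L v)} with hT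
  -- edge weights are at most ω
  have hbdd : BddAbove {m | ∃ s : Finset (Fin 5), G.IsClique (s : Set (Fin 5)) ∧
      m = ∑ v ∈ s, q v} := by
    refine ⟨S, fun m hm => ?_⟩
    obtain ⟨s, _, rfl⟩ := hm
    exact Finset.sum_le_sum_of_subset (Finset.subset_univ s)
  have hedge : ∀ a b : Fin 5, G.Adj a b → q a + q b ≤ ω := by
    intro a b hab
    have hmem : q a + q b ∈ {m | ∃ s : Finset (Fin 5), G.IsClique (s : Set (Fin 5)) ∧
        m = ∑ v ∈ s, q v} := by
      refine ⟨{a, b}, ?_, ?_⟩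
      · rw [Finset.coe_insert, Finset.coe_singleton]
        exact isClique_pair.2 fun _ => hab
      · rw [Finset.sum_pair hab.ne]
    exact le_csSup hbdd hmem
  have h01 : q 0 + q 1 ≤ ω := hedge 0 1 (by decide)
  have h12 : q 1 + q 2 ≤ ω := hedge 1 2 (by decide)
  have h23 : q 2 + q 3 ≤ ω := hedge 2 3 (by decide)
  have h34 : q 3 + q 4 ≤ ω := hedge 3 4 (by decide)
  have h40 : q 4 + q 0 ≤ ω := hedge 4 0 (by decide)
  -- k is achievable
  have hkT : k ∈ T := by
    obtain ⟨N0, N1, N2, N3, N4, b0, b1, b2, b3, b4, c0, c1, c2, c3, c4,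
        d01, d12, d23, d34, d40⟩ :=
      build (q 0) (q 1) (q 2) (q 3) (q 4) k (by omega) (by omega) (by omega) (by omega)
        (by omega) (by omega)
    set N : Fin 5 → Finset ℕ := ![N0, N1, N2, N3, N4] with hN
    have hb : ∀ j, ∀ x ∈ N j, x < k := by
      intro j; fin_cases j <;> simp only [hN, Matrix.cons_val_zero, Matrix.cons_val_one,
        Matrix.head_cons, Matrix.cons_val_two, Matrix.tail_cons, Matrix.cons_val_three,
        Matrix.cons_val_four] <;> assumption
    have hdN : ∀ u v : Fin 5, G.Adj u v → Disjoint (N u) (N v) := by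
      intro u v huv
      fin_cases u <;> fin_cases v <;>
        first
          | exact absurd huv (by decide)
          | simpa [hN] using d01
          | simpa [hN] using d01.symm
          | simpa [hN] using d12
          | simpa [hN] using d12.symm
          | simpa [hN] using d23
          | simpa [hN] using d23.symm
          | simpa [hN] using d34
          | simpa [hN] using d34.symm
          | simpa [hN] using d40
          | simpa [hN] using d40.symm
    refine ⟨fun j => (N j).attachFin (hb j), ?_, ?_⟩
    · intro v
      rw [Finset.card_attachFin]
      fin_cases v <;> simpa [hN]
    · intro u v huv
      rw [Finset.disjoint_left]
      intro a ha ha'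
      rw [Finset.mem_attachFin] at ha ha'
      exact (Finset.disjoint_left.1 (hdN u v huv)) ha ha'
  -- lower bounds
  have hlow : ∀ n ∈ T, ω ≤ n ∧ (S + 1) / 2 ≤ n := by
    rintro n ⟨L, hcard, hdisj⟩
    constructor
    · refine csSup_le ⟨0, ∅, by simp⟩ ?_
      rintro m ⟨s, hs, rfl⟩
      have htri : ∀ a b c : Fin 5, a ≠ b → a ≠ c → b ≠ c →
          ¬(G.Adj a b ∧ G.Adj a c ∧ G.Adj b c) := by decide
      have hcard2 : s.card ≤ 2 := by
        by_contra hgt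
        obtain ⟨a, b, c, ha, hb, hc, hab, hac, hbc⟩ :=
          Finset.two_lt_card_iff.1 (show 2 < s.card by omega)
        exact htri a b c hab hac hbc
          ⟨hs (by simpa using ha) (by simpa using hb) hab,
           hs (by simpa using ha) (by simpa using hc) hac,
           hs (by simpa using hb) (by simpa using hc) hbc⟩
      interval_cases hsc : s.card
      · rw [Finset.card_eq_zero.1 hsc]; simp
      · obtain ⟨a, rfl⟩ := Finset.card_eq_one.1 hsc
        rw [Finset.sum_singleton, ← hcard a]
        calc (L a).card ≤ Finset.univ.card := Finset.card_le_univ _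
          _ = n := by simp
      · obtain ⟨a, b, hab, rfl⟩ := Finset.card_eq_two.1 hsc
        have hadj : G.Adj a b := hs (by simp) (by simp) hab
        rw [Finset.sum_pair hab, ← hcard a, ← hcard b,
          ← Finset.card_union_of_disjoint (hdisj hadj)]
        calc (L a ∪ L b).card ≤ Finset.univ.card := Finset.card_le_univ _
          _ = n := by simp
    · have hdouble : ∑ v : Fin 5, (L v).card ≤ 2 * n := by
        have h1 : ∀ v : Fin 5, (L v).card =
            ∑ x : Fin n, if x ∈ L v then 1 else 0 := by
          intro v
          rw [← Finset.card_filter, Finset.filter_mem_eq_inter, Finset.univ_inter]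
        have h2 : ∀ x : Fin n, (∑ v : Fin 5, if x ∈ L v then 1 else 0) ≤ 2 := by
          intro x
          rw [← Finset.card_filter]
          by_contra hgt
          obtain ⟨a, b, c, ha, hb, hc, hab, hac, hbc⟩ :=
            Finset.two_lt_card_iff.1
              (show 2 < (Finset.univ.filter (fun v => x ∈ L v)).card by omega)
          simp only [Finset.mem_filter] at ha hb hc
          have hind : ∀ a b c : Fin 5, a ≠ b → a ≠ c → b ≠ c →
              G.Adj a b ∨ G.Adj a c ∨ G.Adj b c := by decide
          rcases hind a b c hab hac hbc with h | h | h
          · exact (Finset.disjoint_left.1 (hdisj h)) ha.2 hb.2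
          · exact (Finset.disjoint_left.1 (hdisj h)) ha.2 hc.2
          · exact (Finset.disjoint_left.1 (hdisj h)) hb.2 hc.2
        calc ∑ v : Fin 5, (L v).card
            = ∑ v : Fin 5, ∑ x : Fin n, if x ∈ L v then 1 else 0 := by
              exact Finset.sum_congr rfl fun v _ => h1 v
          _ = ∑ x : Fin n, ∑ v : Fin 5, if x ∈ L v then 1 else 0 := Finset.sum_comm
          _ ≤ ∑ _x : Fin n, 2 := Finset.sum_le_sum fun x _ => h2 x
          _ = 2 * n := by simp [mul_comm]
      have hSn : S ≤ 2 * n := by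
        rw [hSdef]
        calc ∑ v, q v = ∑ v, (L v).card := Finset.sum_congr rfl fun v _ => (hcard v).symm
          _ ≤ 2 * n := hdouble
      omega
  have heq : wChromaticNumber G q = k := by
    refine le_antisymm (Nat.sInf_le hkT) (le_csInf ⟨k, hkT⟩ ?_)
    intro n hn
    exact max_le (hlow n hn).1 (hlow n hn).2
  refine ⟨heq, ?_⟩
  rw [heq]
  have h2S : 2 * S ≤ 5 * ω := by omega
  omega
end

section
/- Let ω be a positive integer and let C: c1c2c3c4c5c1 be a cycle of length 5 with vertex weights q(c1) = q(c3) = ⌈ω/2⌉ and q(c2) = q(c4) = q(c5) = ⌊ω/2⌋. Then ω_q(C) = ω and χ_q(C) = ⌈(5ω − 1)/4⌉. -/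
open SimpleGraph

set_option maxHeartbeats 1000000 in
/-- The 5-cycle `c₁c₂c₃c₄c₅c₁` with weights `q(c₁) = q(c₃) = ⌈ω/2⌉` and
`q(c₂) = q(c₄) = q(c₅) = ⌊ω/2⌋` has `ω_q = ω` and `χ_q = ⌈(5ω − 1)/4⌉`. -/
theorem stmt17 (ω : ℕ) (hω : 0 < ω) (q : Fin 5 → ℕ)
    (h1 : q 0 = (ω + 1) / 2) (h3 : q 2 = (ω + 1) / 2)
    (h2 : q 1 = ω / 2) (h4 : q 3 = ω / 2) (h5 : q 4 = ω / 2) :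
    wCliqueNum (cycleGraph 5) q = ω ∧
    wChromaticNumber (cycleGraph 5) q = (5 * ω - 1 + 3) / 4 := by
  constructor
  · -- clique number
    have key : ∀ s : Finset (Fin 5), (∀ u ∈ s, ∀ v ∈ s, u ≠ v → (cycleGraph 5).Adj u v) →
        (s = ∅ ∨ s = {0} ∨ s = {1} ∨ s = {2} ∨ s = {3} ∨ s = {4} ∨
         s = {0,1} ∨ s = {1,2} ∨ s = {2,3} ∨ s = {3,4} ∨ s = {0,4}) := by decide
    have hbdd : ∀ m ∈ {m | ∃ s : Finset (Fin 5),
        (cycleGraph 5).IsClique (s : Set (Fin 5)) ∧ m = ∑ v ∈ s, q v}, m ≤ ω := by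
      rintro m ⟨s, hs, rfl⟩
      have hs' : ∀ u ∈ s, ∀ v ∈ s, u ≠ v → (cycleGraph 5).Adj u v := by
        intro u hu v hv huv
        exact hs (Finset.mem_coe.2 hu) (Finset.mem_coe.2 hv) huv
      rcases key s hs' with h|h|h|h|h|h|h|h|h|h|h <;> subst h <;>
        simp only [Finset.sum_empty, Finset.sum_singleton,
          Finset.sum_pair (by decide : (0:Fin 5) ≠ 1), Finset.sum_pair (by decide : (1:Fin 5) ≠ 2),
          Finset.sum_pair (by decide : (2:Fin 5) ≠ 3), Finset.sum_pair (by decide : (3:Fin 5) ≠ 4),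
          Finset.sum_pair (by decide : (0:Fin 5) ≠ 4)] <;>
        omega
    have hmem : ω ∈ {m | ∃ s : Finset (Fin 5),
        (cycleGraph 5).IsClique (s : Set (Fin 5)) ∧ m = ∑ v ∈ s, q v} := by
      refine ⟨{0, 1}, ?_, ?_⟩
      · intro u hu v hv huv
        simp only [Finset.coe_insert, Finset.coe_singleton, Set.mem_insert_iff,
          Set.mem_singleton_iff] at hu hv
        rcases hu with rfl|rfl <;> rcases hv with rfl|rfl <;>
          first | exact absurd rfl huv | decide
      · rw [Finset.sum_pair (by decide : (0:Fin 5) ≠ 1)]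
        omega
    exact le_antisymm (csSup_le ⟨ω, hmem⟩ hbdd) (le_csSup ⟨ω, hbdd⟩ hmem)
  · -- chromatic number
    obtain ⟨a, ha⟩ : ∃ a, a = (ω + 1) / 2 := ⟨_, rfl⟩
    obtain ⟨b, hb⟩ : ∃ b, b = ω / 2 := ⟨_, rfl⟩
    obtain ⟨t, ht⟩ : ∃ t, t = b / 2 := ⟨_, rfl⟩
    obtain ⟨r, hr⟩ : ∃ r, r = b % 2 := ⟨_, rfl⟩
    rw [← ha] at h1 h3
    rw [← hb] at h2 h4 h5
    have hdisj : ∀ x y z w : ℕ, y ≤ z → Disjoint (Finset.Ico x y) (Finset.Ico z w) := by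
      intro x y z w h
      simp only [Finset.disjoint_left, Finset.mem_Ico]
      omega
    have mk : ∀ x₁ y₁ x₂ y₂ x₃ y₃ : ℕ, x₁ ≤ y₁ → x₂ ≤ y₂ → x₃ ≤ y₃ →
        y₁ ≤ x₂ → y₂ ≤ x₃ → y₃ ≤ (5 * ω - 1 + 3) / 4 →
        ∃ s : Finset (Fin ((5 * ω - 1 + 3) / 4)),
          s.card = (y₁ - x₁) + (y₂ - x₂) + (y₃ - x₃) ∧
          ∀ c : Fin ((5 * ω - 1 + 3) / 4), c ∈ s ↔
            (x₁ ≤ c.val ∧ c.val < y₁) ∨ (x₂ ≤ c.val ∧ c.val < y₂) ∨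
            (x₃ ≤ c.val ∧ c.val < y₃) := by
      intro x₁ y₁ x₂ y₂ x₃ y₃ e₁ e₂ e₃ d₁ d₂ d₃
      refine ⟨(Finset.Ico x₁ y₁ ∪ Finset.Ico x₂ y₂ ∪ Finset.Ico x₃ y₃).attachFin ?_, ?_, ?_⟩
      · intro m hm
        simp only [Finset.mem_union, Finset.mem_Ico] at hm
        omega
      · rw [Finset.card_attachFin,
          Finset.card_union_of_disjoint (Finset.disjoint_union_left.2
            ⟨hdisj _ _ _ _ (by omega), hdisj _ _ _ _ (by omega)⟩),
          Finset.card_union_of_disjoint (hdisj _ _ _ _ (by omega)),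
          Nat.card_Ico, Nat.card_Ico, Nat.card_Ico]
      · intro c
        simp only [Finset.mem_attachFin, Finset.mem_union, Finset.mem_Ico, or_assoc]
    have hK : a + 3 * t + 2 * r = (5 * ω - 1 + 3) / 4 := by omega
    obtain ⟨L0, c0, m0⟩ := mk 0 (a-t) (a+t) (a+2*t) ((5*ω-1+3)/4) ((5*ω-1+3)/4)
      (by omega) (by omega) le_rfl (by omega) (by omega) le_rfl
    obtain ⟨L1, c1, m1⟩ := mk (a-t) a (a+2*t) (a+3*t+r) ((5*ω-1+3)/4) ((5*ω-1+3)/4)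
      (by omega) (by omega) le_rfl (by omega) (by omega) le_rfl
    obtain ⟨L2, c2, m2⟩ := mk 0 (a-t) a (a+t) ((5*ω-1+3)/4) ((5*ω-1+3)/4)
      (by omega) (by omega) le_rfl (by omega) (by omega) le_rfl
    obtain ⟨L3, c3, m3⟩ := mk (a-t) a (a+t) (a+2*t) (a+3*t+r) (a+3*t+2*r)
      (by omega) (by omega) (by omega) (by omega) (by omega) (by omega)
    obtain ⟨L4, c4, m4⟩ := mk a (a+t) (a+2*t) (a+3*t+r) ((5*ω-1+3)/4) ((5*ω-1+3)/4)
      (by omega) (by omega) le_rfl (by omega) (by omega) le_rfl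
    have hmem : (5 * ω - 1 + 3) / 4 ∈ {k | ∃ L : Fin 5 → Finset (Fin ((5 * ω - 1 + 3) / 4)),
        (∀ v, (L v).card = q v) ∧
        ∀ ⦃u v⦄, (cycleGraph 5).Adj u v → Disjoint (L u) (L v)} := by
      refine ⟨![L0, L1, L2, L3, L4], ?_, ?_⟩
      · intro v
        fin_cases v <;>
          simp only [Fin.zero_eta, Fin.mk_one, Fin.reduceFinMk, Fin.isValue,
            Matrix.cons_val_zero, Matrix.cons_val_one, Matrix.cons_val_two,
            Matrix.cons_val_three, Matrix.cons_val_four, Matrix.tail_cons, Matrix.head_cons,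
            Nat.succ_eq_add_one, Nat.reduceAdd, c0, c1, c2, c3, c4, h1, h2, h3, h4, h5] <;>
          omega
      · intro u v huv
        fin_cases u <;> fin_cases v <;>
          first
          | exact absurd huv (by decide)
          | (simp only [Fin.zero_eta, Fin.mk_one, Fin.reduceFinMk, Fin.isValue,
              Matrix.cons_val_zero, Matrix.cons_val_one, Matrix.cons_val_two,
              Matrix.cons_val_three, Matrix.cons_val_four, Matrix.tail_cons, Matrix.head_cons,
              Nat.succ_eq_add_one, Nat.reduceAdd, Finset.disjoint_left, m0, m1, m2, m3, m4];
             intro c hc hc'; omega)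
    have hlb : ∀ k ∈ {k | ∃ L : Fin 5 → Finset (Fin k), (∀ v, (L v).card = q v) ∧
        ∀ ⦃u v⦄, (cycleGraph 5).Adj u v → Disjoint (L u) (L v)}, (5 * ω - 1 + 3) / 4 ≤ k := by
      rintro k ⟨L, hcard, hdis⟩
      have tri : ∀ x y z : Fin 5, x ≠ y → x ≠ z → y ≠ z →
          (cycleGraph 5).Adj x y ∨ (cycleGraph 5).Adj x z ∨ (cycleGraph 5).Adj y z := by decide
      have hcol : ∀ c : Fin k, (Finset.univ.filter (fun v : Fin 5 => c ∈ L v)).card ≤ 2 := by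
        intro c
        by_contra h
        push_neg at h
        obtain ⟨x, y, z, hx, hy, hz, hxy, hxz, hyz⟩ := Finset.two_lt_card_iff.1 h
        simp only [Finset.mem_filter] at hx hy hz
        rcases tri x y z hxy hxz hyz with hadj | hadj | hadj
        · exact Finset.disjoint_left.1 (hdis hadj) hx.2 hy.2
        · exact Finset.disjoint_left.1 (hdis hadj) hx.2 hz.2
        · exact Finset.disjoint_left.1 (hdis hadj) hy.2 hz.2
      have hsum : ∑ v : Fin 5, q v ≤ 2 * k := by
        calc ∑ v : Fin 5, q v = ∑ v : Fin 5, (L v).card :=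
              Finset.sum_congr rfl (fun v _ => (hcard v).symm)
          _ = ∑ v : Fin 5, ∑ c : Fin k, if c ∈ L v then 1 else 0 := by
              refine Finset.sum_congr rfl (fun v _ => ?_)
              rw [← Finset.card_filter, Finset.filter_univ_mem]
          _ = ∑ c : Fin k, ∑ v : Fin 5, if c ∈ L v then 1 else 0 := Finset.sum_comm
          _ ≤ ∑ _c : Fin k, 2 := by
              refine Finset.sum_le_sum (fun c _ => ?_)
              rw [← Finset.card_filter]
              exact hcol c
          _ = 2 * k := by simp [mul_comm]
      rw [Fin.sum_univ_five] at hsum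
      omega
    exact le_antisymm (Nat.sInf_le hmem) (le_csInf ⟨_, hmem⟩ hlb)
end
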